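/- arXiv:math/0106214 — 3 statements merged into one kernel-verified Lean document; each statement's English description precedes it below -/
import Mathlib

section
/- Let t ∈ ℂ with t ≠ 0 and t + t⁻¹ ≠ 0. Let e be the endomorphism of ℂ² ⊗ ℂ² defined by e(v₁⊗v₁) = 0, e(v₂⊗v₂) = 0, e(v₁⊗v₂) = (t+t⁻¹)⁻¹(t·v₁⊗v₂ − v₂⊗v₁), e(v₂⊗v₁) = (t+t⁻¹)⁻¹(−v₁⊗v₂ + t⁻¹·v₂⊗v₁), set q = t², g = q·id − (1+q)e on ℂ² ⊗ ℂ², and on (ℂ²)^{⊗3} set g₁ = g ⊗ id, g₂ = id ⊗ g, and T = g₂ ∘ g₁. Then for every v ∈ ℂ², T(v ⊗ w) = t³ · (w ⊗ v), where w = v₁⊗v₂ − t⁻¹·v₂⊗v₁. (In particular the Kazhdan–Wenzl invariant r satisfies r = t³ and r² = q³, correcting the claim r² = 1 of Kazhdan–Wenzl for N = 2.) -/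
/-- The standard basis vectors of `ℂ²`. -/
noncomputable def v (i : Fin 2) : Fin 2 → ℂ := Pi.single i 1

/-- The tensor product of two vectors of `ℂ²`, realized in `ℂ² ⊗ ℂ² ≅ ℂ^{2×2}`. -/
noncomputable def tp (u w : Fin 2 → ℂ) : Fin 2 × Fin 2 → ℂ := fun p => u p.1 * w p.2

/-- `f ⊗ id` : the endomorphism of `(ℂ²)^{⊗3}` acting by `f` on the first two factors. -/
noncomputable def amp12 (f : Matrix (Fin 2 × Fin 2) (Fin 2 × Fin 2) ℂ) :
    Matrix (Fin 2 × Fin 2 × Fin 2) (Fin 2 × Fin 2 × Fin 2) ℂ :=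
  Matrix.of fun p q => f (p.1, p.2.1) (q.1, q.2.1) * (if p.2.2 = q.2.2 then 1 else 0)

/-- `id ⊗ f` : the endomorphism of `(ℂ²)^{⊗3}` acting by `f` on the last two factors. -/
noncomputable def amp23 (f : Matrix (Fin 2 × Fin 2) (Fin 2 × Fin 2) ℂ) :
    Matrix (Fin 2 × Fin 2 × Fin 2) (Fin 2 × Fin 2 × Fin 2) ℂ :=
  Matrix.of fun p q => (if p.1 = q.1 then 1 else 0) * f (p.2.1, p.2.2) (q.2.1, q.2.2)

/-- `u ⊗ w` for `u ∈ ℂ²` and `w ∈ ℂ² ⊗ ℂ²`, as a vector of `(ℂ²)^{⊗3}`. -/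
noncomputable def vtp (u : Fin 2 → ℂ) (w : Fin 2 × Fin 2 → ℂ) :
    Fin 2 × Fin 2 × Fin 2 → ℂ := fun p => u p.1 * w p.2

/-- `w ⊗ u` for `w ∈ ℂ² ⊗ ℂ²` and `u ∈ ℂ²`, as a vector of `(ℂ²)^{⊗3}`. -/
noncomputable def tpv (w : Fin 2 × Fin 2 → ℂ) (u : Fin 2 → ℂ) :
    Fin 2 × Fin 2 × Fin 2 → ℂ := fun p => w (p.1, p.2.1) * u p.2.2

/-!
On the basis `vᵢ ⊗ vⱼ` the operator `g` is the Hecke braiding: it multiplies `vᵢ ⊗ vᵢ` by `q = t²`,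
sends `v₁ ⊗ v₂` to `t · v₂ ⊗ v₁` and `v₂ ⊗ v₁` to `t · v₁ ⊗ v₂ + (q - 1) · v₂ ⊗ v₁`; the one
identity behind this is `(1 + t²)(t + t⁻¹)⁻¹ = t`. Both sides of the claim are linear in `v`, so it
suffices to take `v = v₁, v₂`, and there `g₂ g₁ (v ⊗ w)` is a short computation in the basis of
`(ℂ²)^{⊗3}`.
-/

open Matrix

section Tensor

variable (a b c u : Fin 2 → ℂ) (x y : Fin 2 × Fin 2 → ℂ) (s : ℂ)

lemma vtp_add_left (u' : Fin 2 → ℂ) : vtp (u + u') x = vtp u x + vtp u' x := by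
  funext p; simp [vtp, add_mul]

lemma vtp_smul_left : vtp (s • u) x = s • vtp u x := by
  funext p; simp [vtp, mul_assoc]

lemma vtp_add_right : vtp u (x + y) = vtp u x + vtp u y := by
  funext p; simp [vtp, mul_add]

lemma vtp_sub_right : vtp u (x - y) = vtp u x - vtp u y := by
  funext p; simp [vtp, mul_sub]

lemma vtp_smul_right : vtp u (s • x) = s • vtp u x := by
  funext p; simp [vtp, mul_left_comm]

lemma tpv_add_left : tpv (x + y) u = tpv x u + tpv y u := by
  funext p; simp [tpv, add_mul]

lemma tpv_sub_left : tpv (x - y) u = tpv x u - tpv y u := by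
  funext p; simp [tpv, sub_mul]

lemma tpv_smul_left : tpv (s • x) u = s • tpv x u := by
  funext p; simp [tpv, mul_assoc]

lemma tpv_add_right (u' : Fin 2 → ℂ) : tpv x (u + u') = tpv x u + tpv x u' := by
  funext p; simp [tpv, mul_add]

lemma tpv_smul_right : tpv x (s • u) = s • tpv x u := by
  funext p; simp [tpv, mul_left_comm]

lemma vtp_tp : vtp a (tp b c) = tpv (tp a b) c := by
  funext p; simp [vtp, tpv, tp, mul_assoc]

lemma amp12_mulVec_tpv (f : Matrix (Fin 2 × Fin 2) (Fin 2 × Fin 2) ℂ) :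
    amp12 f *ᵥ tpv x u = tpv (f *ᵥ x) u := by
  funext p
  simp only [mulVec, dotProduct, amp12, mul_ite, mul_one, mul_zero, of_apply, tpv, ite_mul,
    zero_mul, Fintype.sum_prod_type, Finset.sum_ite_eq, Finset.mem_univ, ↓reduceIte,
    Fin.sum_univ_two]
  ring

-- Stated on `tpv` inputs so that `tpv (tp _ _) _` is the one `simp` normal form of basis tensors.
lemma amp23_mulVec_tpv_tp (f : Matrix (Fin 2 × Fin 2) (Fin 2 × Fin 2) ℂ) :
    amp23 f *ᵥ tpv (tp a b) c = vtp a (f *ᵥ tp b c) := by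
  funext p
  simp only [mulVec, dotProduct, amp23, ite_mul, one_mul, zero_mul, of_apply, tpv, tp, vtp,
    Fintype.sum_prod_type, Finset.sum_ite_irrel, Finset.sum_const_zero, Finset.sum_ite_eq,
    Finset.mem_univ, ↓reduceIte, Fin.sum_univ_two]
  ring

lemma eq_smul_v_add_smul_v : u = u 0 • v 0 + u 1 • v 1 := by
  funext i; fin_cases i <;> simp [v]

end Tensor

lemma ne_zero_of_add_inv_ne_zero {K : Type*} [DivisionRing K] {t : K} (ht : t + t⁻¹ ≠ 0) :
    t ≠ 0 := by
  rintro rfl; simp at ht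

lemma one_add_sq_mul_inv_add_inv {K : Type*} [Field K] {t : K} (ht : t + t⁻¹ ≠ 0) :
    (1 + t ^ 2) * (t + t⁻¹)⁻¹ = t := by
  have ht0 : t ≠ 0 := ne_zero_of_add_inv_ne_zero ht
  have hfac : t + t⁻¹ = t⁻¹ * (1 + t ^ 2) := by field_simp; ring
  rw [hfac] at ht ⊢
  rw [mul_inv, inv_inv, mul_left_comm, mul_inv_cancel₀ (right_ne_zero_of_mul ht), mul_one]

section HeckeGenerator

variable {t : ℂ} {e g : Matrix (Fin 2 × Fin 2) (Fin 2 × Fin 2) ℂ}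
  (hg : g = t ^ 2 • (1 : Matrix (Fin 2 × Fin 2) (Fin 2 × Fin 2) ℂ) - (1 + t ^ 2) • e)
include hg

lemma mulVec_eq_sq_smul_sub_smul_mulVec (x : Fin 2 × Fin 2 → ℂ) :
    g *ᵥ x = t ^ 2 • x - (1 + t ^ 2) • (e *ᵥ x) := by
  rw [hg, sub_mulVec, smul_mulVec, smul_mulVec, one_mulVec]

lemma mulVec_tp_self {i : Fin 2} (he : e *ᵥ tp (v i) (v i) = 0) :
    g *ᵥ tp (v i) (v i) = t ^ 2 • tp (v i) (v i) := by
  rw [mulVec_eq_sq_smul_sub_smul_mulVec hg, he, smul_zero, sub_zero]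

lemma mulVec_tp_zero_one (ht : t + t⁻¹ ≠ 0)
    (he : e *ᵥ tp (v 0) (v 1) = (t + t⁻¹)⁻¹ • (t • tp (v 0) (v 1) - tp (v 1) (v 0))) :
    g *ᵥ tp (v 0) (v 1) = t • tp (v 1) (v 0) := by
  rw [mulVec_eq_sq_smul_sub_smul_mulVec hg, he, smul_smul, one_add_sq_mul_inv_add_inv ht]
  module

lemma mulVec_tp_one_zero (ht : t + t⁻¹ ≠ 0)
    (he : e *ᵥ tp (v 1) (v 0) = (t + t⁻¹)⁻¹ • (-(tp (v 0) (v 1)) + t⁻¹ • tp (v 1) (v 0))) :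
    g *ᵥ tp (v 1) (v 0) = t • tp (v 0) (v 1) + (t ^ 2 - 1) • tp (v 1) (v 0) := by
  rw [mulVec_eq_sq_smul_sub_smul_mulVec hg, he, smul_smul, one_add_sq_mul_inv_add_inv ht]
  match_scalars <;> field_simp [ne_zero_of_add_inv_ne_zero ht]

end HeckeGenerator

noncomputable def trivialVector (t : ℂ) : Fin 2 × Fin 2 → ℂ := tp (v 0) (v 1) - t⁻¹ • tp (v 1) (v 0)

section HeckeAction

variable {t : ℂ} {g : Matrix (Fin 2 × Fin 2) (Fin 2 × Fin 2) ℂ}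
  (h00 : g *ᵥ tp (v 0) (v 0) = t ^ 2 • tp (v 0) (v 0))
  (h11 : g *ᵥ tp (v 1) (v 1) = t ^ 2 • tp (v 1) (v 1))
  (h01 : g *ᵥ tp (v 0) (v 1) = t • tp (v 1) (v 0))
  (h10 : g *ᵥ tp (v 1) (v 0) = t • tp (v 0) (v 1) + (t ^ 2 - 1) • tp (v 1) (v 0))

include h00 h01 in
lemma mulVec_vtp_zero_trivialVector :
    (amp23 g * amp12 g) *ᵥ vtp (v 0) (trivialVector t) = t ^ 3 • tpv (trivialVector t) (v 0) := by
  simp only [trivialVector, vtp_sub_right, vtp_smul_right, vtp_tp, ← mulVec_mulVec, mulVec_sub,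
    mulVec_smul, amp12_mulVec_tpv, amp23_mulVec_tpv_tp, h00, h01, tpv_sub_left, tpv_smul_left]
  module

include h11 h01 h10 in
lemma mulVec_vtp_one_trivialVector (ht : t ≠ 0) :
    (amp23 g * amp12 g) *ᵥ vtp (v 1) (trivialVector t) = t ^ 3 • tpv (trivialVector t) (v 1) := by
  simp only [trivialVector, vtp_sub_right, vtp_smul_right, vtp_tp, ← mulVec_mulVec, mulVec_sub,
    mulVec_smul, mulVec_add, amp12_mulVec_tpv, amp23_mulVec_tpv_tp, h11, h01, h10, tpv_sub_left,
    tpv_smul_left, tpv_add_left, vtp_add_right]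
  match_scalars <;> grind

end HeckeAction

theorem kazhdanWenzl_invariant_general (t : ℂ) (ht' : t + t⁻¹ ≠ 0)
    (e : Matrix (Fin 2 × Fin 2) (Fin 2 × Fin 2) ℂ)
    (h00 : e.mulVec (tp (v 0) (v 0)) = 0)
    (h11 : e.mulVec (tp (v 1) (v 1)) = 0)
    (h01 : e.mulVec (tp (v 0) (v 1)) =
      (t + t⁻¹)⁻¹ • (t • tp (v 0) (v 1) - tp (v 1) (v 0)))
    (h10 : e.mulVec (tp (v 1) (v 0)) =
      (t + t⁻¹)⁻¹ • (-(tp (v 0) (v 1)) + t⁻¹ • tp (v 1) (v 0)))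
    (q : ℂ) (hq : q = t ^ 2)
    (g : Matrix (Fin 2 × Fin 2) (Fin 2 × Fin 2) ℂ)
    (hg : g = q • (1 : Matrix (Fin 2 × Fin 2) (Fin 2 × Fin 2) ℂ) - (1 + q) • e)
    (w : Fin 2 × Fin 2 → ℂ) (hw : w = tp (v 0) (v 1) - t⁻¹ • tp (v 1) (v 0)) :
    ∀ u : Fin 2 → ℂ, (amp23 g * amp12 g).mulVec (vtp u w) = t ^ 3 • tpv w u := by
  subst hq
  obtain rfl : w = trivialVector t := hw
  have ht : t ≠ 0 := ne_zero_of_add_inv_ne_zero ht'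
  have g00 := mulVec_tp_self hg h00
  have g11 := mulVec_tp_self hg h11
  have g01 := mulVec_tp_zero_one hg ht' h01
  have g10 := mulVec_tp_one_zero hg ht' h10
  intro u
  rw [eq_smul_v_add_smul_v u]
  simp only [vtp_add_left, vtp_smul_left, mulVec_add, mulVec_smul, tpv_add_right, tpv_smul_right,
    mulVec_vtp_zero_trivialVector g00 g01, mulVec_vtp_one_trivialVector g11 g01 g10 ht]
  module

/-- With `g = q·id − (1+q)e`, `q = t²`, `g₁ = g ⊗ id`, `g₂ = id ⊗ g` and `T = g₂g₁`,
one has `T(v ⊗ w) = t³ (w ⊗ v)` for the invariant vector `w = v₁⊗v₂ − t⁻¹·v₂⊗v₁`;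
i.e. the Kazhdan–Wenzl invariant is `r = t³`, so `r² = q³` (and not `r² = 1`). -/
theorem kazhdanWenzl_invariant (t : ℂ) (ht : t ≠ 0) (ht' : t + t⁻¹ ≠ 0)
    (e : Matrix (Fin 2 × Fin 2) (Fin 2 × Fin 2) ℂ)
    (h00 : e.mulVec (tp (v 0) (v 0)) = 0)
    (h11 : e.mulVec (tp (v 1) (v 1)) = 0)
    (h01 : e.mulVec (tp (v 0) (v 1)) =
      (t + t⁻¹)⁻¹ • (t • tp (v 0) (v 1) - tp (v 1) (v 0)))
    (h10 : e.mulVec (tp (v 1) (v 0)) =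
      (t + t⁻¹)⁻¹ • (-(tp (v 0) (v 1)) + t⁻¹ • tp (v 1) (v 0)))
    (q : ℂ) (hq : q = t ^ 2)
    (g : Matrix (Fin 2 × Fin 2) (Fin 2 × Fin 2) ℂ)
    (hg : g = q • (1 : Matrix (Fin 2 × Fin 2) (Fin 2 × Fin 2) ℂ) - (1 + q) • e)
    (w : Fin 2 × Fin 2 → ℂ) (hw : w = tp (v 0) (v 1) - t⁻¹ • tp (v 1) (v 0)) :
    ∀ u : Fin 2 → ℂ, (amp23 g * amp12 g).mulVec (vtp u w) = t ^ 3 • tpv w u :=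
  kazhdanWenzl_invariant_general t ht' e h00 h11 h01 h10 q hq g hg w hw
end

section
/- Let B be a finite-dimensional semisimple ℂ-algebra, A a ℂ-algebra, and φ : A → B an algebra homomorphism. Suppose that every simple left B-module, regarded as an A-module via φ, is a simple A-module, and that any two non-isomorphic simple left B-modules remain non-isomorphic as A-modules via φ. Then φ is surjective. -/
/-!
Let `A` act on `B` and on every `B`-module through `φ`. By Schur's lemma over `ℂ`, the two
hypotheses make every `A`-linear map between simple `B`-modules `B`-linear; since `B` is a
semisimple `B`-module, separated by its maps to simple quotients, every `A`-linear endomorphism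
of `B` commutes with left multiplication. Moreover `B` is a semisimple `A`-module, so the Jacobson
density theorem writes each left multiplication `x ↦ b * x`, evaluated at `1`, as `x ↦ φ a * x`.
-/

theorem LinearMap.map_smul_of_isSimpleModule (k : Type*) {A B M N : Type*} [Field k]
    [IsAlgClosed k] [Ring A] [Ring B] [Algebra k A] [SMul A B] [AddCommGroup M] [AddCommGroup N]
    [Module A M] [Module B M] [Module A N] [Module B N] [IsScalarTower A B M]
    [IsScalarTower A B N] [Module k M] [IsScalarTower k A M] [SMulCommClass k B M]
    [FiniteDimensional k M] [IsSimpleModule A M] [IsSimpleModule A N]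
    (hiso : Nonempty (M ≃ₗ[A] N) → Nonempty (M ≃ₗ[B] N)) (f : M →ₗ[A] N) (b : B) (x : M) :
    f (b • x) = b • f x := by
  rcases eq_or_ne f 0 with rfl | hf
  · simp
  obtain ⟨e⟩ := hiso ⟨.ofBijective f (bijective_of_ne_zero hf)⟩
  obtain ⟨c, hc⟩ := (IsSimpleModule.algebraMap_end_bijective_of_isAlgClosed k).2
    ((e.restrictScalars A).symm.toLinearMap ∘ₗ f)
  have hf : ∀ y, f y = e (c • y) := fun y => by
    simpa using congr(e ($hc y)).symm
  rw [hf, hf, smul_comm, map_smul]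

section
variable {A B M N : Type*} [Ring A] [Ring B] [SMul A B] [AddCommGroup M] [AddCommGroup N]
    [Module A M] [Module B M] [Module A N] [Module B N] [IsScalarTower A B M]
    [IsScalarTower A B N]

theorem LinearMap.map_smul_of_isSemisimpleModule [IsSemisimpleModule B M]
    [IsSemisimpleModule B N]
    (h : ∀ (m : Submodule B M) (K : Submodule B N), IsSimpleModule B m → IsCoatom K →
      ∀ (g : m →ₗ[A] N ⧸ K) (b : B) (x : m), g (b • x) = b • g x)
    (f : M →ₗ[A] N) (b : B) (x : M) : f (b • x) = b • f x := by
  let U : Submodule B M :=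
    { carrier := {x | ∀ b : B, f (b • x) = b • f x}
      add_mem' := fun hx hy b => by simp only [smul_add, map_add, hx b, hy b]
      zero_mem' := fun b => by simp
      smul_mem' := fun c x hx b => by rw [smul_smul, hx, hx, mul_smul] }
  suffices U = ⊤ from (this ▸ Submodule.mem_top : x ∈ U) b
  rw [eq_top_iff, ← IsSemisimpleModule.sSup_simples_eq_top, sSup_le_iff]
  intro m hm y hy b
  rw [← sub_eq_zero, ← Submodule.mem_bot B, ← IsSemisimpleModule.jacobson_eq_bot B N,
    Module.jacobson, Submodule.mem_sInf]
  intro K hK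
  have := h m K hm hK ((K.mkQ.restrictScalars A) ∘ₗ f ∘ₗ m.subtype.restrictScalars A) b ⟨y, hy⟩
  rw [← Submodule.Quotient.mk_eq_zero, Submodule.Quotient.mk_sub]
  simpa [sub_eq_zero] using this

theorem IsSemisimpleModule.of_isSimpleModule_restrictScalars [IsSemisimpleModule B M]
    (h : ∀ m : Submodule B M, IsSimpleModule B m → IsSimpleModule A m) :
    IsSemisimpleModule A M := by
  refine IsSemisimpleModule.of_sSup_simples_eq_top (eq_top_iff.2 ?_)
  rw [← Submodule.restrictScalars_top A B M, ← IsSemisimpleModule.sSup_simples_eq_top,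
    Submodule.restrictScalars_sSup, sSup_le_iff]
  rintro _ ⟨m, hm, rfl⟩
  exact le_sSup (h m hm)
end

theorem exists_smul_one_eq_of_isSemisimpleModule {A B : Type*} [Ring A] [Ring B] [Module A B]
    [IsScalarTower A B B] [IsSemisimpleModule A B]
    (h : ∀ (f : B →ₗ[A] B) (b x : B), f (b * x) = b * f x) (b : B) : ∃ a : A, a • (1 : B) = b := by
  let L : Module.End (Module.End A B) B :=
    { toFun := (b * ·), map_add' := mul_add b, map_smul' := fun f x => (h f b x).symm }
  obtain ⟨a, ha⟩ := jacobson_density L {1}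
  exact ⟨a, by simpa [L] using (ha 1 (Finset.mem_singleton_self 1)).symm⟩

/-- If `B` is a finite-dimensional semisimple ℂ-algebra and `φ : A → B` an algebra
homomorphism such that every simple `B`-module stays simple as an `A`-module via `φ`
and non-isomorphic simple `B`-modules stay non-isomorphic as `A`-modules via `φ`,
then `φ` is surjective. -/
theorem surjective_of_simple_preserving {A B : Type} [Ring A] [Algebra ℂ A]
    [Ring B] [Algebra ℂ B] [FiniteDimensional ℂ B] [IsSemisimpleRing B]
    (φ : A →ₐ[ℂ] B)
    (hsimple : ∀ (M : Type) [AddCommGroup M] [Module B M], IsSimpleModule B M →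
      letI : Module A M := Module.compHom M (φ : A →+* B)
      IsSimpleModule A M)
    (hdistinct : ∀ (M N : Type) [AddCommGroup M] [AddCommGroup N] [Module B M]
      [Module B N], IsSimpleModule B M → IsSimpleModule B N →
      ¬Nonempty (M ≃ₗ[B] N) →
      letI : Module A M := Module.compHom M (φ : A →+* B)
      letI : Module A N := Module.compHom N (φ : A →+* B)
      ¬Nonempty (M ≃ₗ[A] N)) :
    Function.Surjective φ := by
  let : Module A B := Module.compHom B (φ : A →+* B)
  have : IsScalarTower A B B := ⟨fun a b c => mul_assoc (φ a) b c⟩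
  have : IsScalarTower ℂ A B := ⟨fun c a b => by
    change φ (c • a) * b = c • (φ a * b)
    rw [map_smul, smul_mul_assoc]⟩
  have hlin : ∀ (f : B →ₗ[A] B) (b x : B), f (b * x) = b * f x :=
    LinearMap.map_smul_of_isSemisimpleModule fun m K hm hK => by
      have : IsSimpleModule B (B ⧸ K) := (isSimpleModule_iff_isCoatom).2 hK
      -- `A` acts on submodules and quotients of `B` definitionally through `φ`
      have : IsSimpleModule A m := hsimple m hm
      have : IsSimpleModule A (B ⧸ K) := hsimple (B ⧸ K) inferInstance
      refine LinearMap.map_smul_of_isSimpleModule ℂ fun ⟨e⟩ => ?_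
      by_contra hne
      exact hdistinct m (B ⧸ K) hm inferInstance hne ⟨e⟩
  have : IsSemisimpleModule A B :=
    IsSemisimpleModule.of_isSimpleModule_restrictScalars fun m hm => hsimple m hm
  intro b
  obtain ⟨a, ha⟩ := exists_smul_one_eq_of_isSemisimpleModule hlin b
  exact ⟨a, (mul_one (φ a)).symm.trans ha⟩
end

section
/- Let V be a finite-dimensional complex vector space with an internal direct sum decomposition V = V₁ ⊕ V₂, let A ⊆ End_ℂ(V) be a unital subalgebra preserving V₁ and V₂ such that V₁ and V₂ are simple A-modules which are not isomorphic to each other, and let B ⊆ End_ℂ(V) be a unital subalgebra containing A. If there exist b ∈ B and v ∈ V₂ such that the V₁-component of b(v) (with respect to the decomposition V = V₁ ⊕ V₂) is nonzero, then the centralizer of B in End_ℂ(V) consists exactly of the scalar multiples of the identity: { x ∈ End_ℂ(V) : x∘b' = b'∘x for all b' ∈ B } = ℂ·id_V. -/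
/-!
Since `A ⊆ B`, an endomorphism `x` commuting with `B` commutes with `A` and hence with the
projections onto `V₁` and `V₂`. Its off-diagonal blocks `V₁ → V₂` and `V₂ → V₁` are therefore
`A`-intertwiners between inequivalent simple modules, so they vanish by Schur's lemma, and its
diagonal blocks are scalars `c₁`, `c₂` by Schur's lemma over `ℂ`. Finally `x` commutes with the
mixing element `b`: for `v ∈ V₂`, `b v` is a `c₂`-eigenvector of `x`, and so is its nonzero
`V₁`-component, which is also a `c₁`-eigenvector; hence `c₁ = c₂`.
-/

open Module.End

namespace Submodule

variable {R V : Type*} [CommRing R] [AddCommGroup V] [Module R V]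

def InvariantUnder (S : Set (Module.End R V)) (W : Submodule R V) : Prop :=
  ∀ a ∈ S, ∀ u ∈ W, a u ∈ W

/-- `⊥` counts as irreducible: nonvanishing is not part of this notion. -/
def IrreducibleUnder (S : Set (Module.End R V)) (W : Submodule R V) : Prop :=
  ∀ U ≤ W, U.InvariantUnder S → U = ⊥ ∨ U = W

variable {S : Set (Module.End R V)} {P Q : Submodule R V} {x y : Module.End R V}

theorem InvariantUnder.inf (hP : P.InvariantUnder S) (hQ : Q.InvariantUnder S) :
    (P ⊓ Q).InvariantUnder S :=
  fun a ha _ hu => ⟨hP a ha _ hu.1, hQ a ha _ hu.2⟩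

theorem InvariantUnder.map (hP : P.InvariantUnder S) (hy : ∀ a ∈ S, Commute y a) :
    (P.map y).InvariantUnder S := by
  rintro a ha _ ⟨u, hu, rfl⟩
  exact ⟨a u, hP a ha u hu, LinearMap.congr_fun (hy a ha) u⟩

theorem invariantUnder_eigenspace (hx : ∀ a ∈ S, Commute x a) (c : R) :
    (x.eigenspace c).InvariantUnder S :=
  fun a ha => mapsTo_genEigenspace_of_comm (hx a ha) c 1

theorem invariantUnder_ker (hy : ∀ a ∈ S, Commute y a) : (LinearMap.ker y).InvariantUnder S := by
  intro a ha u hu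
  rw [LinearMap.mem_ker] at hu ⊢
  rw [← Module.End.mul_apply, hy a ha, Module.End.mul_apply, hu, map_zero]

theorem eq_zero_or_exists_linearEquiv_of_irreducibleUnder (hP : P.InvariantUnder S)
    (hPirr : P.IrreducibleUnder S) (hQirr : Q.IrreducibleUnder S)
    (hy : ∀ a ∈ S, Commute y a) (hyPQ : ∀ u ∈ P, y u ∈ Q) :
    (∀ u ∈ P, y u = 0) ∨ ∃ g : P ≃ₗ[R] Q, ∀ u : P, (g u : V) = y u := by
  rcases (hPirr (P ⊓ LinearMap.ker y) inf_le_left (hP.inf (invariantUnder_ker hy))).symm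
    with hker | hker
  · exact Or.inl fun u hu => (hker.ge hu).2
  rcases hQirr (P.map y) (map_le_iff_le_comap.mpr hyPQ) (hP.map hy) with hrange | hrange
  · exact Or.inl fun u hu => (mem_bot R).mp (hrange ▸ mem_map_of_mem hu)
  refine Or.inr ⟨LinearEquiv.ofBijective (y.restrict hyPQ) ⟨?_, ?_⟩, fun u => rfl⟩
  · refine (injective_iff_map_eq_zero _).mpr fun u hu => ?_
    have hyu : y u = 0 := congrArg Subtype.val hu
    exact Subtype.ext ((mem_bot R).mp (hker ▸ ⟨u.2, hyu⟩ : (u : V) ∈ (⊥ : Submodule R V)))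
  · rintro ⟨q, hq⟩
    obtain ⟨u, hu, rfl⟩ := hrange.ge hq
    exact ⟨⟨u, hu⟩, rfl⟩

theorem commute_projection (hPQ : IsCompl P Q) {a : Module.End R V}
    (hP : ∀ u ∈ P, a u ∈ P) (hQ : ∀ u ∈ Q, a u ∈ Q) : Commute (P.projection Q hPQ) a :=
  (LinearMap.IsIdempotentElem.commute_iff (isIdempotentElem_projection hPQ)).mpr
    ⟨by rw [range_projection]; exact hP, by rw [ker_projection]; exact hQ⟩

/-- The equivalence `g` is the `P → Q` block of `x`. -/
theorem mapsTo_or_exists_intertwining (hPQ : IsCompl P Q) (hP : P.InvariantUnder S)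
    (hQ : Q.InvariantUnder S) (hPirr : P.IrreducibleUnder S) (hQirr : Q.IrreducibleUnder S)
    (hx : ∀ a ∈ S, Commute x a) :
    (∀ u ∈ P, x u ∈ P) ∨
      ∃ g : P ≃ₗ[R] Q, ∀ a (ha : a ∈ S) (u : P), (g ⟨a u, hP a ha u u.2⟩ : V) = a (g u) := by
  set y := Q.projection P hPQ.symm * x
  have hy : ∀ a ∈ S, Commute y a := fun a ha =>
    (commute_projection hPQ.symm (hQ a ha) (hP a ha)).mul_left (hx a ha)
  rcases eq_zero_or_exists_linearEquiv_of_irreducibleUnder hP hPirr hQirr hy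
    (fun u _ => projection_apply_mem _ _) with hzero | ⟨g, hg⟩
  · exact Or.inl fun u hu => (projection_apply_eq_zero_iff hPQ.symm).mp (hzero u hu)
  · refine Or.inr ⟨g, fun a ha u => ?_⟩
    rw [hg, hg]
    exact LinearMap.congr_fun (hy a ha) u

theorem symm_intertwining (hP : P.InvariantUnder S) (hQ : Q.InvariantUnder S) (g : P ≃ₗ[R] Q)
    (hg : ∀ a (ha : a ∈ S) (u : P), (g ⟨a u, hP a ha u u.2⟩ : V) = a (g u))
    {a : Module.End R V} (ha : a ∈ S) (q : Q) :
    (g.symm ⟨a q, hQ a ha q q.2⟩ : V) = a (g.symm q) := by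
  have : g.symm ⟨a q, hQ a ha q q.2⟩ = ⟨a (g.symm q), hP a ha _ (g.symm q).2⟩ := by
    rw [LinearEquiv.symm_apply_eq]
    ext
    rw [hg _ ha, LinearEquiv.apply_symm_apply]
  rw [this]

end Submodule

section Eigenspaces

open Submodule

variable {K V : Type*} [Field K] [AddCommGroup V] [Module K V]
  {S : Set (Module.End K V)} {P Q : Submodule K V} {x : Module.End K V}

theorem exists_le_eigenspace_of_irreducibleUnder [IsAlgClosed K] [FiniteDimensional K V]
    (hP : P.InvariantUnder S) (hPirr : P.IrreducibleUnder S) (hx : ∀ a ∈ S, Commute x a)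
    (hxP : ∀ u ∈ P, x u ∈ P) : ∃ c, P ≤ x.eigenspace c := by
  rcases eq_or_ne P ⊥ with rfl | hP0
  · exact ⟨0, bot_le⟩
  have : Nontrivial P := nontrivial_iff_ne_bot.mpr hP0
  obtain ⟨c, hc⟩ := exists_eigenvalue (x.restrict hxP)
  have hmeet : ¬Disjoint (x.eigenspace c) P := fun h => hc (eigenspace_restrict_eq_bot hxP h)
  refine ⟨c, ?_⟩
  rcases hPirr (P ⊓ x.eigenspace c) inf_le_left (hP.inf (invariantUnder_eigenspace hx c))
    with h | h
  · exact absurd (disjoint_iff.mpr (inf_comm P _ ▸ h)) hmeet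
  · exact inf_eq_left.mp h

theorem eq_of_le_eigenspace_of_mixing {c₁ c₂ : K} (hPQ : IsCompl P Q) (hP : P ≤ x.eigenspace c₁)
    (hQ : Q ≤ x.eigenspace c₂) {b : Module.End K V} (hb : Commute x b) {v : V} (hv : v ∈ Q)
    (hbv : P.projectionOnto Q hPQ (b v) ≠ 0) : c₁ = c₂ := by
  by_contra hne
  have hw : b v ∈ x.eigenspace c₂ := mapsTo_genEigenspace_of_comm hb c₂ 1 (hQ hv)
  have hp₂ : P.projection Q hPQ (b v) ∈ x.eigenspace c₂ := by
    rw [projection_eq_self_sub_projection hPQ.symm]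
    exact sub_mem hw (hQ (projection_apply_mem _ _))
  have hp₁ : P.projection Q hPQ (b v) ∈ x.eigenspace c₁ := hP (projection_apply_mem _ _)
  exact hbv (Subtype.ext (disjoint_def.mp (x.disjoint_genEigenspace hne 1 1) _ hp₁ hp₂))

theorem eq_smul_one_of_le_eigenspace (hPQ : IsCompl P Q) {c : K} (hP : P ≤ x.eigenspace c)
    (hQ : Q ≤ x.eigenspace c) : x = c • 1 := by
  have htop : x.eigenspace c = ⊤ := top_unique (hPQ.sup_eq_top ▸ sup_le hP hQ)
  ext v
  exact mem_eigenspace_iff.mp (htop ▸ mem_top)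

end Eigenspaces

theorem centralizer_eq_scalars_general {V : Type} [AddCommGroup V] [Module ℂ V]
    [FiniteDimensional ℂ V]
    (V₁ V₂ : Submodule ℂ V) (hcompl : IsCompl V₁ V₂)
    (A B : Subalgebra ℂ (Module.End ℂ V)) (hAB : A ≤ B)
    (hA1 : ∀ a ∈ A, ∀ x ∈ V₁, a x ∈ V₁)
    (hA2 : ∀ a ∈ A, ∀ x ∈ V₂, a x ∈ V₂)
    (h1simple : ∀ W : Submodule ℂ V, W ≤ V₁ → (∀ a ∈ A, ∀ x ∈ W, a x ∈ W) →
      W = ⊥ ∨ W = V₁)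
    (h2simple : ∀ W : Submodule ℂ V, W ≤ V₂ → (∀ a ∈ A, ∀ x ∈ W, a x ∈ W) →
      W = ⊥ ∨ W = V₂)
    (hnoniso : ¬∃ g : V₁ ≃ₗ[ℂ] V₂, ∀ a : A, ∀ x : V₁,
      (g ⟨(a : Module.End ℂ V) x, hA1 a a.2 x x.2⟩ : V) = (a : Module.End ℂ V) (g x))
    (hmix : ∃ b ∈ B, ∃ x ∈ V₂, (V₁.linearProjOfIsCompl V₂ hcompl) (b x) ≠ 0) :
    {x : Module.End ℂ V | ∀ b' ∈ B, x * b' = b' * x} =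
      {x : Module.End ℂ V | ∃ c : ℂ, x = c • (1 : Module.End ℂ V)} := by
  ext x
  refine ⟨fun hx => ?_, ?_⟩
  · have hxA : ∀ a ∈ (A : Set (Module.End ℂ V)), Commute x a := fun a ha => hx a (hAB ha)
    have hx₁ : ∀ u ∈ V₁, x u ∈ V₁ :=
      (Submodule.mapsTo_or_exists_intertwining hcompl hA1 hA2 h1simple h2simple hxA).resolve_right
        fun ⟨g, hg⟩ => hnoniso ⟨g, fun a => hg a a.2⟩
    have hx₂ : ∀ u ∈ V₂, x u ∈ V₂ :=
      (Submodule.mapsTo_or_exists_intertwining hcompl.symm hA2 hA1 h2simple h1simple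
        hxA).resolve_right fun ⟨g, hg⟩ =>
          hnoniso ⟨g.symm, fun a => Submodule.symm_intertwining hA2 hA1 g hg a.2⟩
    obtain ⟨c₁, hc₁⟩ := exists_le_eigenspace_of_irreducibleUnder hA1 h1simple hxA hx₁
    obtain ⟨c₂, hc₂⟩ := exists_le_eigenspace_of_irreducibleUnder hA2 h2simple hxA hx₂
    obtain ⟨b, hb, v, hv, hbv⟩ := hmix
    obtain rfl := eq_of_le_eigenspace_of_mixing hcompl hc₁ hc₂ (hx b hb) hv hbv
    exact ⟨c₁, eq_smul_one_of_le_eigenspace hcompl hc₁ hc₂⟩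
  · rintro ⟨c, rfl⟩ b _
    exact (Commute.one_left b).smul_left c

/-- Let `V = V₁ ⊕ V₂` be a finite-dimensional complex vector space, `A ⊆ End(V)` a
unital subalgebra preserving `V₁` and `V₂` such that `V₁`, `V₂` are inequivalent
simple `A`-modules, and let `B ⊇ A` be a unital subalgebra of `End(V)`. If some
`b ∈ B` maps a vector of `V₂` to a vector with nonzero `V₁`-component, then the
centralizer of `B` in `End(V)` reduces to the scalars `ℂ·id`. -/
theorem centralizer_eq_scalars {V : Type} [AddCommGroup V] [Module ℂ V]
    [FiniteDimensional ℂ V]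
    (V₁ V₂ : Submodule ℂ V) (hcompl : IsCompl V₁ V₂)
    (A B : Subalgebra ℂ (Module.End ℂ V)) (hAB : A ≤ B)
    (hA1 : ∀ a ∈ A, ∀ x ∈ V₁, a x ∈ V₁)
    (hA2 : ∀ a ∈ A, ∀ x ∈ V₂, a x ∈ V₂)
    (h1ne : V₁ ≠ ⊥)
    (h2ne : V₂ ≠ ⊥)
    (h1simple : ∀ W : Submodule ℂ V, W ≤ V₁ → (∀ a ∈ A, ∀ x ∈ W, a x ∈ W) →
      W = ⊥ ∨ W = V₁)
    (h2simple : ∀ W : Submodule ℂ V, W ≤ V₂ → (∀ a ∈ A, ∀ x ∈ W, a x ∈ W) →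
      W = ⊥ ∨ W = V₂)
    (hnoniso : ¬∃ g : V₁ ≃ₗ[ℂ] V₂, ∀ a : A, ∀ x : V₁,
      (g ⟨(a : Module.End ℂ V) x, hA1 a a.2 x x.2⟩ : V) = (a : Module.End ℂ V) (g x))
    (hmix : ∃ b ∈ B, ∃ x ∈ V₂, (V₁.linearProjOfIsCompl V₂ hcompl) (b x) ≠ 0) :
    {x : Module.End ℂ V | ∀ b' ∈ B, x * b' = b' * x} =
      {x : Module.End ℂ V | ∃ c : ℂ, x = c • (1 : Module.End ℂ V)} :=
  centralizer_eq_scalars_general V₁ V₂ hcompl A B hAB hA1 hA2 h1simple h2simple hnoniso hmix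
end
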